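/- arXiv:1010.3591 — 5 statements merged into one kernel-verified Lean document; each statement's English description precedes it below -/
import Mathlib

section
/- Let x, y, a, b, c be nonnegative real numbers and let z be a real number such that x + y + z = 0 and exp(c) ≥ exp(a) + exp(b). Then −x·log x − y·log y − z·log|z| + a·x + b·y + c·z ≤ 0, where by convention 0·log 0 = 0. -/
open Real

/-! With `s = x + y = -z`, the inequality is the sum of two Fenchel–Young inequalities
`t * r - s * exp r ≤ t * log (t / s) - t` for the conjugate pair `t log (t / s) - t` and
`s exp r`, at `(x, a - c)` and `(y, b - c)`; the hypothesis `exp a + exp b ≤ exp c` says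
exactly that the two exponential terms add up to at most `s`. -/

theorem mul_add_one_sub_mul_exp_le {t s : ℝ} (ht : 0 ≤ t) (hs : 0 < s) (r : ℝ) :
    t * (r + 1) - s * exp r ≤ t * (log t - log s) := by
  obtain rfl | ht := ht.eq_or_lt
  · simp [(mul_pos hs (exp_pos r)).le]
  -- `exp (r - log t + log s) = s * exp r / t` and `w + 1 ≤ exp w`
  have key := add_one_le_exp (r - log t + log s)
  rw [exp_add, exp_sub, exp_log ht, exp_log hs] at key
  have hmul := mul_le_mul_of_nonneg_left key ht.le
  rw [show t * (exp r / t * s) = s * exp r by field_simp] at hmul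
  linarith

theorem flat_tetra_convexity_ineq_general (x y a b c z : ℝ)
    (hx : 0 ≤ x) (hy : 0 ≤ y)
    (hsum : x + y + z = 0) (hexp : Real.exp a + Real.exp b ≤ Real.exp c) :
    -x * Real.log x - y * Real.log y - z * Real.log |z| + a * x + b * y + c * z ≤ 0 := by
  obtain hs | hs := (add_nonneg hx hy).eq_or_lt
  · obtain ⟨rfl, rfl, rfl⟩ : x = 0 ∧ y = 0 ∧ z = 0 := by
      refine ⟨?_, ?_, ?_⟩ <;> linarith
    simp
  have hexp_sub : exp (a - c) + exp (b - c) ≤ 1 := by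
    rwa [exp_sub, exp_sub, ← add_div, div_le_one (exp_pos c)]
  have hx_young := mul_add_one_sub_mul_exp_le hx hs (a - c)
  have hy_young := mul_add_one_sub_mul_exp_le hy hs (b - c)
  rw [show z = -(x + y) by linarith, abs_neg, abs_of_pos hs]
  linarith [mul_le_mul_of_nonneg_left hexp_sub hs.le]

/-- Lemma 2.7: the key convexity inequality. -/
theorem flat_tetra_convexity_ineq (x y a b c z : ℝ)
    (hx : 0 ≤ x) (hy : 0 ≤ y) (ha : 0 ≤ a) (hb : 0 ≤ b) (hc : 0 ≤ c)
    (hsum : x + y + z = 0) (hexp : Real.exp a + Real.exp b ≤ Real.exp c) :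
    -x * Real.log x - y * Real.log y - z * Real.log |z| + a * x + b * y + c * z ≤ 0 :=
  flat_tetra_convexity_ineq_general x y a b c z hx hy hsum hexp
end

section
/- Let x, y, a, b, c be nonnegative real numbers with exp(c) ≥ exp(a) + exp(b). Then (x+y)·log(x+y) − x·log x − y·log y ≤ (c−a)·x + (c−b)·y, where by convention 0·log 0 = 0. -/
/-! Write S = ∑ xᵢ. Gibbs' inequality `u log v - u log u ≤ v - u` (from `log t ≤ t - 1`) with
`u = xᵢ`, `v = S exp (aᵢ - c)`, summed over `i`, bounds the left-hand side minus the right-hand side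
by `S (∑ exp (aᵢ - c) - 1)`, which is nonpositive exactly by the hypothesis on the exponentials. -/

open Real Finset

theorem mul_log_sub_mul_log_le {u v : ℝ} (hu : 0 ≤ u) (hv : 0 < v) :
    u * log v - u * log u ≤ v - u := by
  rcases hu.eq_or_lt with rfl | hu
  · simpa using hv.le
  have h := mul_le_mul_of_nonneg_left (log_le_sub_one_of_pos (div_pos hv hu)) hu.le
  rwa [log_div hv.ne' hu.ne', mul_sub, mul_sub_one, mul_div_cancel₀ v hu.ne'] at h

theorem sum_mul_log_sum_sub_sum_mul_log_le {ι : Type*} (s : Finset ι) (x a : ι → ℝ) (c : ℝ)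
    (hx : ∀ i ∈ s, 0 ≤ x i) (hexp : ∑ i ∈ s, exp (a i) ≤ exp c) :
    (∑ i ∈ s, x i) * log (∑ i ∈ s, x i) - ∑ i ∈ s, x i * log (x i)
      ≤ ∑ i ∈ s, (c - a i) * x i := by
  set S := ∑ i ∈ s, x i
  rcases (sum_nonneg hx).eq_or_lt with hS | hS
  · have hx0 : ∀ i ∈ s, x i = 0 := (sum_eq_zero_iff_of_nonneg hx).1 hS.symm
    have hlog : ∑ i ∈ s, x i * log (x i) = 0 := sum_eq_zero fun i hi => by simp [hx0 i hi]
    have hrhs : ∑ i ∈ s, (c - a i) * x i = 0 := sum_eq_zero fun i hi => by simp [hx0 i hi]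
    simp [show S = 0 from hS.symm, hlog, hrhs]
  have hterm : ∀ i ∈ s,
      x i * log S + (a i - c) * x i - x i * log (x i) ≤ S * exp (a i - c) - x i := by
    intro i hi
    have h := mul_log_sub_mul_log_le (hx i hi) (by positivity : 0 < S * exp (a i - c))
    rw [log_mul hS.ne' (exp_ne_zero _), log_exp] at h
    linarith
  have hsum : ∑ i ∈ s, exp (a i - c) ≤ 1 := by
    simp_rw [exp_sub, ← sum_div]
    exact div_le_one_of_le₀ hexp (exp_pos c).le
  calc S * log S - ∑ i ∈ s, x i * log (x i)
      = ∑ i ∈ s, (x i * log S + (a i - c) * x i - x i * log (x i))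
          + ∑ i ∈ s, (c - a i) * x i := by
        rw [sum_mul, ← sum_sub_distrib, ← sum_add_distrib]
        exact sum_congr rfl fun i _ => by ring
    _ ≤ ∑ i ∈ s, (S * exp (a i - c) - x i) + ∑ i ∈ s, (c - a i) * x i :=
        add_le_add_left (sum_le_sum hterm) _
    _ = S * (∑ i ∈ s, exp (a i - c) - 1) + ∑ i ∈ s, (c - a i) * x i := by
        rw [sum_sub_distrib, ← mul_sum]
        ring
    _ ≤ ∑ i ∈ s, (c - a i) * x i :=
        add_le_of_nonpos_left (mul_nonpos_of_nonneg_of_nonpos hS.le (by linarith))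

theorem convexity_ineq_two_var_general (x y a b c : ℝ)
    (hx : 0 ≤ x) (hy : 0 ≤ y)
    (hexp : Real.exp a + Real.exp b ≤ Real.exp c) :
    (x + y) * Real.log (x + y) - x * Real.log x - y * Real.log y
      ≤ (c - a) * x + (c - b) * y := by
  have h := sum_mul_log_sum_sub_sum_mul_log_le univ ![x, y] ![a, b] c
    (by simp [Fin.forall_fin_two, hx, hy]) (by simpa [Fin.sum_univ_two] using hexp)
  simpa [Fin.sum_univ_two, sub_sub] using h

/-- Equivalent reformulation of Lemma 2.7 with z = -x-y substituted. -/
theorem convexity_ineq_two_var (x y a b c : ℝ)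
    (hx : 0 ≤ x) (hy : 0 ≤ y) (ha : 0 ≤ a) (hb : 0 ≤ b) (hc : 0 ≤ c)
    (hexp : Real.exp a + Real.exp b ≤ Real.exp c) :
    (x + y) * Real.log (x + y) - x * Real.log x - y * Real.log y
      ≤ (c - a) * x + (c - b) * y :=
  convexity_ineq_two_var_general x y a b c hx hy hexp
end

section
/- Let x ≥ 0 and let a, b, c be real numbers with exp(c) ≥ exp(a) + exp(b). Then (x+1)·log(x+1) − x·log x ≤ (c−a)·x + (c−b), where by convention 0·log 0 = 0. -/
/-!
With `p = exp (a - c)` and `q = exp (b - c)` the hypothesis reads `p + q ≤ 1`. The Fenchel–Young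
inequality `u * t ≤ u * log u - u + exp t` for the entropy `u * log u - u`, whose conjugate is
`exp`, applied at `(u, t) = (x, log (x + 1) + a - c)` and `(1, log (x + 1) + b - c)` and summed,
bounds the left-hand side minus the right-hand side by `(x + 1) * (p + q - 1) ≤ 0`.
-/

open Real

theorem Real.mul_le_mul_log_sub_add_exp {u : ℝ} (hu : 0 ≤ u) (t : ℝ) :
    u * t ≤ u * log u - u + exp t := by
  rcases hu.eq_or_lt with rfl | hu
  · simpa using (exp_pos t).le
  have key : u * (t - log u + 1) ≤ exp t := calc
    u * (t - log u + 1) ≤ u * exp (t - log u) := by gcongr; exact add_one_le_exp _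
    _ = exp t := by rw [exp_sub, exp_log hu]; field_simp
  linarith

theorem Real.exp_sub_add_exp_sub_le_one {a b c : ℝ} (h : exp a + exp b ≤ exp c) :
    exp (a - c) + exp (b - c) ≤ 1 := by
  rwa [exp_sub, exp_sub, ← add_div, div_le_one (exp_pos c)]

/-- Inequality (2.18): the normalized (y = 1) case of Lemma 2.7. -/
theorem convexity_ineq_normalized (x a b c : ℝ) (hx : 0 ≤ x)
    (hexp : Real.exp a + Real.exp b ≤ Real.exp c) :
    (x + 1) * Real.log (x + 1) - x * Real.log x ≤ (c - a) * x + (c - b) := by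
  have hx1 : 0 < x + 1 := by linarith
  have hpq := exp_sub_add_exp_sub_le_one hexp
  have hp := mul_le_mul_log_sub_add_exp hx (log (x + 1) + (a - c))
  have hq := mul_le_mul_log_sub_add_exp zero_le_one (log (x + 1) + (b - c))
  rw [exp_add, exp_log hx1] at hp hq
  simp only [log_one, mul_zero, one_mul, zero_sub] at hq
  linarith [mul_le_mul_of_nonneg_left hpq hx1.le]
end

section
/- Let a₁, a₂ be nonnegative real numbers and a₃ a real number with a₁ + a₂ + a₃ = 0, and let w₁, w₂, w₃ be real numbers with exp(w₃) = exp(w₁) + exp(w₂). Then −a₁·log|a₁| − a₂·log|a₂| − a₃·log|a₃| + a₁·w₁ + a₂·w₂ + a₃·w₃ ≤ 0, where by convention 0·log 0 = 0. -/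
open Real

/-! With `s = a₁ + a₂ = -a₃` and `yᵢ = wᵢ - w₃ + log s`, the quantity is `∑ aᵢ (yᵢ - log aᵢ)`,
and the degenerate triangle equality says `exp y₁ + exp y₂ = s`. Summing the Fenchel–Young
inequality `a (y - log a) ≤ exp y - a` for `exp` and its conjugate bounds it by `s - s = 0`. -/

lemma mul_sub_log_le_exp_sub {a : ℝ} (ha : 0 ≤ a) (y : ℝ) : a * (y - log a) ≤ exp y - a := by
  rcases ha.eq_or_lt with rfl | ha
  · simpa using (exp_pos y).le
  have h := log_le_sub_one_of_pos (div_pos (exp_pos y) ha)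
  rw [log_div (exp_ne_zero y) ha.ne', log_exp] at h
  calc a * (y - log a) ≤ a * (exp y / a - 1) := mul_le_mul_of_nonneg_left h ha.le
    _ = exp y - a := by field_simp

/-- Inequality (2.16): the contribution of a flat tetrahedron to the derivative
of the volume is nonpositive. -/
theorem flat_tetra_contribution_nonpos (a₁ a₂ a₃ w₁ w₂ w₃ : ℝ)
    (ha₁ : 0 ≤ a₁) (ha₂ : 0 ≤ a₂) (hsum : a₁ + a₂ + a₃ = 0)
    (hw : Real.exp w₃ = Real.exp w₁ + Real.exp w₂) :
    -a₁ * Real.log |a₁| - a₂ * Real.log |a₂| - a₃ * Real.log |a₃|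
      + a₁ * w₁ + a₂ * w₂ + a₃ * w₃ ≤ 0 := by
  obtain rfl : a₃ = -(a₁ + a₂) := by linarith
  rcases (add_nonneg ha₁ ha₂).eq_or_lt with hs | hs
  · obtain ⟨rfl, rfl⟩ : a₁ = 0 ∧ a₂ = 0 := ⟨by linarith, by linarith⟩
    simp
  set s := a₁ + a₂
  have hexp : exp (w₁ - w₃ + log s) + exp (w₂ - w₃ + log s) = s := by
    rw [exp_add, exp_add, exp_log hs, exp_sub, exp_sub, ← add_mul, ← add_div, ← hw,
      div_self (exp_ne_zero _), one_mul]
  have h₁ := mul_sub_log_le_exp_sub ha₁ (w₁ - w₃ + log s)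
  have h₂ := mul_sub_log_le_exp_sub ha₂ (w₂ - w₃ + log s)
  rw [abs_of_nonneg ha₁, abs_of_nonneg ha₂, abs_neg, abs_of_pos hs]
  linarith
end

section
/- The Lobachevsky function Λ(t) = −∫₀ᵗ log|2 sin u| du is continuous on the interval [0, π]. -/
/-!
The integrand `log |2 sin u|` is `log ‖f u‖` for the analytic function `f = 2 sin`, so its only
singularities are logarithmic ones at the zeros of `f`, and it is integrable on every bounded
interval. Its primitive, and hence `Λ`, is therefore continuous on all of `ℝ`.
-/

open Real MeasureTheory

/-- The Lobachevsky function Λ(t) = −∫₀ᵗ log|2 sin u| du. -/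
noncomputable def lobachevsky (t : ℝ) : ℝ :=
  -∫ u in (0 : ℝ)..t, Real.log |2 * Real.sin u|

theorem intervalIntegrable_log_abs_two_mul_sin (a b : ℝ) :
    IntervalIntegrable (fun u => log |2 * sin u|) volume a b :=
  (analyticOnNhd_const.mul analyticOnNhd_sin).meromorphicOn.intervalIntegrable_log_norm

theorem continuous_lobachevsky : Continuous lobachevsky :=
  (intervalIntegral.continuous_primitive intervalIntegrable_log_abs_two_mul_sin 0).neg

/-- The Lobachevsky function is continuous on [0, π]. -/
theorem continuousOn_lobachevsky :
    ContinuousOn lobachevsky (Set.Icc 0 Real.pi) :=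
  continuous_lobachevsky.continuousOn
end
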